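/- arXiv:1302.5719 — 2 statements merged into one kernel-verified Lean document; each statement's English description precedes it below -/
import Mathlib

section
/- Let K be an unconditional convex body in R^n (n ≥ 2). If x ∈ K ∩ R^n_+, then the point with i-th coordinate 2·vol_{n-1}(K ∩ e_i^⊥)/(n·vol(K)) for each i belongs to the polar body K°. -/
/-!
Let `p` be the point in question. For `y ∈ K` we have `⟪y, p⟫ ≤ ⟪|y|, p⟫` because `p ≥ 0`, and
`|y| ∈ K` by unconditionality, so it suffices to bound `⟪z, p⟫` for `z ∈ K ∩ ℝⁿ₊`. The cones with
apex `z` over the sections `K ∩ e_iᗮ ∩ ℝⁿ₊` lie in `K ∩ ℝⁿ₊` and pairwise meet in null sets, and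
slicing parallel to the base shows that the `i`-th cone has volume at least
`z_i · vol_{n-1}(K ∩ e_iᗮ ∩ ℝⁿ₊) / n`. Summing over `i`, and using that by unconditionality each
orthant carries the same share of `vol K` and of every `vol_{n-1}(K ∩ e_iᗮ)`, gives `⟪z, p⟫ ≤ 1`.
-/

open MeasureTheory

noncomputable section

/-- The polar body of a set in `ℝⁿ`. -/
def polarBody {n : ℕ} (K : Set (EuclideanSpace ℝ (Fin n))) :
    Set (EuclideanSpace ℝ (Fin n)) :=
  {y | ∀ x ∈ K, inner ℝ x y ≤ (1 : ℝ)}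

/-- An unconditional convex body: compact, convex, nonempty interior, invariant
under all coordinate sign changes. -/
def IsUnconditionalBody {n : ℕ} (K : Set (EuclideanSpace ℝ (Fin n))) : Prop :=
  IsCompact K ∧ Convex ℝ K ∧ (interior K).Nonempty ∧
    ∀ x ∈ K, ∀ ε : Fin n → ℝ, (∀ i, ε i = 1 ∨ ε i = -1) →
      (WithLp.toLp 2 (fun i => ε i * x i) : EuclideanSpace ℝ (Fin n)) ∈ K

/-- The section of `K ⊂ ℝ^{n+1}` by the coordinate hyperplane `e_i^⊥`,
identified with a subset of `ℝ^n` by deleting the `i`-th coordinate. -/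
def coordSection {n : ℕ} (i : Fin (n + 1)) (K : Set (EuclideanSpace ℝ (Fin (n + 1)))) :
    Set (EuclideanSpace ℝ (Fin n)) :=
  (fun x : EuclideanSpace ℝ (Fin (n + 1)) =>
    (WithLp.toLp 2 (fun j => x (i.succAbove j)) : EuclideanSpace ℝ (Fin n))) '' {x | x ∈ K ∧ x i = 0}

open Set Pointwise

def IsUnconditional {ι : Type*} (A : Set (ι → ℝ)) : Prop :=
  ∀ x ∈ A, ∀ ε : ι → ℝ, (∀ i, ε i = 1 ∨ ε i = -1) → (fun i => ε i * x i) ∈ A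

theorem IsUnconditional.abs_mem {ι : Type*} {A : Set (ι → ℝ)} (hA : IsUnconditional A)
    {x : ι → ℝ} (hx : x ∈ A) : (fun i => |x i|) ∈ A := by
  convert hA x hx (fun i => if x i < 0 then -1 else 1) (fun i => by split_ifs <;> simp) using 1
  ext i
  split_ifs with h
  · simp [abs_of_neg h]
  · simp [abs_of_nonneg (not_lt.1 h)]

theorem MeasureTheory.Measure.addHaar_ker_eq_zero {E : Type*} [NormedAddCommGroup E]
    [NormedSpace ℝ E] [MeasurableSpace E] [BorelSpace E] [FiniteDimensional ℝ E] (μ : Measure E)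
    [μ.IsAddHaarMeasure] {f : E →ₗ[ℝ] ℝ} (hf : f ≠ 0) :
    μ (LinearMap.ker f) = 0 :=
  Measure.addHaar_submodule μ _ fun h => hf (LinearMap.ker_eq_top.1 h)

theorem volume_setOf_apply_eq_zero {ι : Type*} [Fintype ι] (j : ι) :
    volume {x : ι → ℝ | x j = 0} = 0 := by
  classical
  refine Measure.addHaar_ker_eq_zero volume
    (f := LinearMap.proj (R := ℝ) (φ := fun _ : ι => ℝ) j) fun h => ?_
  simpa using LinearMap.congr_fun h (Pi.single (M := fun _ => ℝ) j 1)

theorem volume_setOf_mul_apply_eq_mul_apply {ι : Type*} [Fintype ι] {i j : ι} (hij : i ≠ j)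
    {a b : ℝ} (ha : a ≠ 0) : volume {x : ι → ℝ | a * x i = b * x j} = 0 := by
  classical
  have hf : a • LinearMap.proj (R := ℝ) (φ := fun _ : ι => ℝ) i - b • LinearMap.proj j ≠ 0 :=
    fun h => ha <| by
      simpa [hij.symm] using LinearMap.congr_fun h (Pi.single (M := fun _ => ℝ) i 1)
  convert Measure.addHaar_ker_eq_zero volume hf using 2
  ext x; simp [sub_eq_zero]

theorem measurePreserving_mul_signs {ι : Type*} [Fintype ι] {ε : ι → ℝ}
    (hε : ∀ i, ε i = 1 ∨ ε i = -1) :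
    MeasurePreserving (fun (x : ι → ℝ) i => ε i * x i) := by
  refine volume_preserving_pi fun i => ?_
  rcases hε i with h | h
  · convert MeasurePreserving.id (volume : Measure ℝ) using 1; ext t; simp [h]
  · convert Measure.measurePreserving_neg (volume : Measure ℝ) using 1; ext t; simp [h]

section Pi

variable {ι : Type*} [DecidableEq ι]

def coordReflect (j : ι) (x : ι → ℝ) : ι → ℝ :=
  fun i => Function.update (1 : ι → ℝ) j (-1) i * x i

theorem coordReflect_apply (j : ι) (x : ι → ℝ) (i : ι) :
    coordReflect j x i = if i = j then -x i else x i := by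
  by_cases h : i = j <;> simp [coordReflect, h]

theorem coordReflect_involutive (j : ι) : Function.Involutive (coordReflect j) := fun x => by
  ext i; by_cases h : i = j <;> simp [coordReflect_apply, h]

theorem IsUnconditional.preimage_coordReflect {A : Set (ι → ℝ)} (hA : IsUnconditional A)
    (j : ι) : coordReflect j ⁻¹' A = A := by
  have hmem : ∀ x ∈ A, coordReflect j x ∈ A := fun x hx => hA x hx _ fun i => by
    by_cases h : i = j <;> simp [h]
  refine Subset.antisymm (fun x hx => ?_) (fun x hx => hmem x hx)
  simpa only [coordReflect_involutive j x] using hmem _ hx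

variable [Fintype ι]

theorem volume_preimage_coordReflect (j : ι) (s : Set (ι → ℝ)) :
    volume (coordReflect j ⁻¹' s) = volume s := by
  have hmp : MeasurePreserving (coordReflect j) := measurePreserving_mul_signs fun i => by
    by_cases h : i = j <;> simp [h]
  exact hmp.measure_preimage_equiv (f := MeasurableEquiv.ofInvolutive _
    (coordReflect_involutive j) hmp.measurable) s

theorem volume_eq_two_mul_volume_inter_coord_nonneg {B : Set (ι → ℝ)} (j : ι)
    (hB : coordReflect j ⁻¹' B = B) :
    volume B = 2 * volume (B ∩ {x | 0 ≤ x j}) := by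
  have hneg : B \ {x | 0 ≤ x j} = coordReflect j ⁻¹' (B ∩ {x | 0 < x j}) := by
    rw [preimage_inter, hB]; ext x; simp [coordReflect_apply]
  have hpos : B ∩ {x | 0 < x j} = (B ∩ {x | 0 ≤ x j}) \ {x | x j = 0} := by
    ext x; simp [lt_iff_le_and_ne, eq_comm, and_assoc]
  rw [← measure_inter_add_sdiff B (measurableSet_le measurable_const (measurable_pi_apply j)),
    hneg, volume_preimage_coordReflect, hpos, measure_sdiff_null (volume_setOf_apply_eq_zero j),
    two_mul]

theorem IsUnconditional.volume_eq_two_pow_mul_volume_inter_nonneg {A : Set (ι → ℝ)}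
    (hA : IsUnconditional A) (s : Finset ι) :
    volume A = 2 ^ s.card * volume (A ∩ {x | ∀ i ∈ s, 0 ≤ x i}) := by
  induction s using Finset.induction_on with
  | empty => simp
  | insert j s hj ih =>
    have hB : coordReflect j ⁻¹' (A ∩ {x | ∀ i ∈ s, 0 ≤ x i}) =
        A ∩ {x | ∀ i ∈ s, 0 ≤ x i} := by
      rw [preimage_inter, hA.preimage_coordReflect]
      congr 1; ext x
      simp only [mem_preimage, mem_ofPred_eq, coordReflect_apply]
      exact forall₂_congr fun i hi => by rw [if_neg (ne_of_mem_of_not_mem hi hj)]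
    rw [ih, volume_eq_two_mul_volume_inter_coord_nonneg j hB, Finset.card_insert_of_notMem hj,
      pow_succ, mul_assoc, inter_assoc]
    congr 3
    ext x; simp [and_comm]

theorem IsUnconditional.volume_eq_two_pow_mul_volume_inter_Ici {A : Set (ι → ℝ)}
    (hA : IsUnconditional A) :
    volume A = 2 ^ Fintype.card ι * volume (A ∩ Ici 0) := by
  rw [hA.volume_eq_two_pow_mul_volume_inter_nonneg Finset.univ, Finset.card_univ]
  congr 2; ext x; simp [Pi.le_def]

end Pi

def piCoordSection {n : ℕ} (i : Fin (n + 1)) (A : Set (Fin (n + 1) → ℝ)) : Set (Fin n → ℝ) :=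
  (fun x j => x (i.succAbove j)) '' {x ∈ A | x i = 0}

section CoordSection

variable {n : ℕ} {A : Set (Fin (n + 1) → ℝ)}

theorem IsUnconditional.piCoordSection (hA : IsUnconditional A) (i : Fin (n + 1)) :
    IsUnconditional (_root_.piCoordSection i A) := by
  rintro _ ⟨x, ⟨hxA, hxi⟩, rfl⟩ ε hε
  refine ⟨fun k => Fin.insertNth (α := fun _ => ℝ) i 1 ε k * x k,
    ⟨hA x hxA _ fun k => ?_, by simp [hxi]⟩, ?_⟩
  · rcases i.eq_self_or_eq_succAbove k with rfl | ⟨j, rfl⟩ <;> simp [hε]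
  · ext j; simp

theorem IsUnconditional.piCoordSection_inter_Ici (hA : IsUnconditional A) (i : Fin (n + 1)) :
    _root_.piCoordSection i A ∩ Ici 0 = _root_.piCoordSection i (A ∩ Ici 0) := by
  refine Subset.antisymm ?_ ?_
  · rintro _ ⟨⟨x, ⟨hxA, hxi⟩, rfl⟩, hx0⟩
    refine ⟨fun k => |x k|, ⟨⟨hA.abs_mem hxA, fun k => abs_nonneg _⟩, by simp [hxi]⟩, ?_⟩
    ext j; exact abs_of_nonneg (hx0 j)
  · rintro _ ⟨x, ⟨⟨hxA, hx0⟩, hxi⟩, rfl⟩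
    exact ⟨⟨x, ⟨hxA, hxi⟩, rfl⟩, fun j => hx0 _⟩

end CoordSection

theorem lintegral_ofReal_one_sub_div_pow {c : ℝ} (hc : 0 < c) (m : ℕ) :
    ∫⁻ s in Ioo 0 c, ENNReal.ofReal ((1 - s / c) ^ m) = ENNReal.ofReal (c / (m + 1)) := by
  have hint : IntegrableOn (fun s : ℝ => (1 - s / c) ^ m) (Ioo 0 c) :=
    (by fun_prop : Continuous fun s : ℝ => (1 - s / c) ^ m).integrableOn_Icc.mono_set
      Ioo_subset_Icc_self
  have hnonneg : 0 ≤ᵐ[volume.restrict (Ioo 0 c)] fun s : ℝ => (1 - s / c) ^ m := by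
    filter_upwards [ae_restrict_mem measurableSet_Ioo] with s hs
    exact pow_nonneg (sub_nonneg.2 ((div_le_one hc).2 hs.2.le)) m
  rw [← ofReal_integral_eq_lintegral_ofReal hint hnonneg, ← integral_Ioc_eq_integral_Ioo,
    ← intervalIntegral.integral_of_le hc.le,
    intervalIntegral.integral_comp_div (fun u : ℝ => (1 - u) ^ m) hc.ne', zero_div,
    div_self hc.ne', intervalIntegral.integral_comp_sub_left (fun u : ℝ => u ^ m)]
  norm_num [integral_pow, div_eq_mul_inv]

theorem ofReal_div_mul_volume_piCoordSection_le_volume_convexJoin {m : ℕ} {i : Fin (m + 1)}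
    {z : Fin (m + 1) → ℝ} (hzi : 0 < z i) (B : Set (Fin (m + 1) → ℝ)) :
    ENNReal.ofReal (z i / (m + 1)) * volume (piCoordSection i B) ≤
      volume (convexJoin ℝ {z} {x ∈ B | x i = 0}) := by
  set F := piCoordSection i B
  set C := convexJoin ℝ {z} {x ∈ B | x i = 0}
  set e := MeasurableEquiv.piFinSuccAbove (fun _ : Fin (m + 1) => ℝ) i
  set T := toMeasurable volume (e.symm ⁻¹' C)
  -- the slice of the cone at height `x i = s` contains a translate of `(1 - s / z i) • F`
  have hslice : ∀ s ∈ Ioo 0 (z i),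
      ENNReal.ofReal ((1 - s / z i) ^ m) * volume F ≤ volume (Prod.mk s ⁻¹' T) := by
    intro s hs
    set t := s / z i
    have ht : 0 ≤ t ∧ t ≤ 1 := ⟨div_nonneg hs.1.le hzi.le, (div_le_one hzi).2 hs.2.le⟩
    have hsub : (t • fun j => z (i.succAbove j)) +ᵥ (1 - t) • F ⊆ Prod.mk s ⁻¹' T := by
      rintro _ ⟨_, ⟨_, ⟨w, ⟨hwB, hwi⟩, rfl⟩, rfl⟩, rfl⟩
      apply subset_toMeasurable
      refine mem_convexJoin.2 ⟨z, rfl, w, ⟨hwB, hwi⟩, t, 1 - t, ht.1, by linarith, by ring, ?_⟩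
      ext k
      rcases i.eq_self_or_eq_succAbove k with rfl | ⟨j, rfl⟩
      · simp [e, hwi, t, div_mul_cancel₀ _ hzi.ne']
      · simp [e]
    calc ENNReal.ofReal ((1 - t) ^ m) * volume F
        = volume ((t • fun j => z (i.succAbove j)) +ᵥ (1 - t) • F) := by
          rw [measure_vadd, Measure.addHaar_smul, Module.finrank_fin_fun,
            abs_of_nonneg (pow_nonneg (by linarith) m)]
      _ ≤ volume (Prod.mk s ⁻¹' T) := measure_mono hsub
  calc ENNReal.ofReal (z i / (m + 1)) * volume F
      = (∫⁻ s in Ioo 0 (z i), ENNReal.ofReal ((1 - s / z i) ^ m)) * volume F := by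
        rw [lintegral_ofReal_one_sub_div_pow hzi]
    _ = ∫⁻ s in Ioo 0 (z i), ENNReal.ofReal ((1 - s / z i) ^ m) * volume F :=
        (lintegral_mul_const _ (by fun_prop)).symm
    _ ≤ ∫⁻ s in Ioo 0 (z i), volume (Prod.mk s ⁻¹' T) := setLIntegral_mono' measurableSet_Ioo hslice
    _ ≤ ∫⁻ s, volume (Prod.mk s ⁻¹' T) := setLIntegral_le_lintegral _ _
    _ = volume T := by
        rw [Measure.volume_eq_prod, Measure.prod_apply (measurableSet_toMeasurable _ _)]
    _ = volume C := by
        rw [measure_toMeasurable]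
        exact (volume_preserving_piFinSuccAbove (fun _ => ℝ) i).symm.measure_preimage_equiv C

section Cone

variable {ι : Type*} {B : Set (ι → ℝ)} {z : ι → ℝ}

theorem exists_apply_eq_mul_of_mem_convexJoin (hB : B ⊆ Ici 0) {i : ι} {y : ι → ℝ}
    (hy : y ∈ convexJoin ℝ {z} {x ∈ B | x i = 0}) :
    ∃ t : ℝ, y i = t * z i ∧ ∀ k, t * z k ≤ y k := by
  obtain ⟨_, rfl, w, ⟨hwB, hwi⟩, a, b, -, hb, -, rfl⟩ := mem_convexJoin.1 hy
  refine ⟨a, by simp [hwi], fun k => ?_⟩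
  have hwk : 0 ≤ w k := hB hwB k
  simp only [Pi.add_apply, Pi.smul_apply, smul_eq_mul]
  nlinarith

theorem convexJoin_inter_convexJoin_subset (hB : B ⊆ Ici 0) {i j : ι} (hzi : 0 < z i)
    (hzj : 0 < z j) :
    convexJoin ℝ {z} {x ∈ B | x i = 0} ∩ convexJoin ℝ {z} {x ∈ B | x j = 0} ⊆
      {y | z j * y i = z i * y j} := by
  rintro y ⟨hyi, hyj⟩
  obtain ⟨t, hti, htk⟩ := exists_apply_eq_mul_of_mem_convexJoin hB hyi
  obtain ⟨s, hsj, hsk⟩ := exists_apply_eq_mul_of_mem_convexJoin hB hyj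
  have hts : t = s := le_antisymm (le_of_mul_le_mul_right (hsj ▸ htk j) hzj)
    (le_of_mul_le_mul_right (hti ▸ hsk i) hzi)
  rw [mem_ofPred_eq, hti, hsj, hts]
  ring

end Cone

theorem Convex.sum_ofReal_mul_volume_piCoordSection_le {n : ℕ} {B : Set (Fin (n + 1) → ℝ)}
    (hB : Convex ℝ B) (hB0 : B ⊆ Ici 0) {z : Fin (n + 1) → ℝ} (hz : z ∈ B) :
    ∑ i, ENNReal.ofReal (z i / (n + 1)) * volume (piCoordSection i B) ≤ volume B := by
  classical
  set C : Fin (n + 1) → Set (Fin (n + 1) → ℝ) := fun i => convexJoin ℝ {z} {x ∈ B | x i = 0}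
  set I := Finset.univ.filter fun i => 0 < z i
  have hC : ∀ i, Convex ℝ (C i) := fun i =>
    (convex_singleton z).convexJoin (hB.inter (convex_hyperplane (LinearMap.proj i).isLinear 0))
  have hdisj : (I : Set (Fin (n + 1))).Pairwise (Function.onFun (AEDisjoint volume) C) :=
    fun i hi j hj hij => measure_mono_null
      (convexJoin_inter_convexJoin_subset hB0 (Finset.mem_filter.1 hi).2 (Finset.mem_filter.1 hj).2)
      (volume_setOf_mul_apply_eq_mul_apply hij (Finset.mem_filter.1 hj).2.ne')
  calc ∑ i, ENNReal.ofReal (z i / (n + 1)) * volume (piCoordSection i B)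
      = ∑ i ∈ I, ENNReal.ofReal (z i / (n + 1)) * volume (piCoordSection i B) := by
        refine (Finset.sum_filter_of_ne fun i _ h => ?_).symm
        by_contra hzi
        have hzi' : z i / (n + 1) ≤ 0 :=
          div_nonpos_of_nonpos_of_nonneg (not_lt.1 hzi) (by positivity)
        exact h (by rw [ENNReal.ofReal_of_nonpos hzi', zero_mul])
    _ ≤ ∑ i ∈ I, volume (C i) :=
        Finset.sum_le_sum fun i hi => ofReal_div_mul_volume_piCoordSection_le_volume_convexJoin
          (Finset.mem_filter.1 hi).2 B
    _ = volume (⋃ i ∈ I, C i) :=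
        (measure_biUnion_finset₀ hdisj fun i _ => (hC i).nullMeasurableSet (μ := volume)).symm
    _ ≤ volume B := measure_mono <| iUnion₂_subset fun i _ =>
        convexJoin_subset (singleton_subset_iff.2 hz) (sep_subset _ _) hB

theorem IsUnconditional.sum_ofReal_mul_volume_piCoordSection_le {n : ℕ}
    {A : Set (Fin (n + 1) → ℝ)} (hAu : IsUnconditional A) (hA : Convex ℝ A)
    {z : Fin (n + 1) → ℝ} (hz : z ∈ A) (hz0 : 0 ≤ z) :
    ∑ i, ENNReal.ofReal (2 * z i / (n + 1)) * volume (_root_.piCoordSection i A) ≤ volume A := by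
  have hsec : ∀ i, volume (_root_.piCoordSection i A) =
      2 ^ n * volume (_root_.piCoordSection i (A ∩ Ici 0)) := fun i => by
    rw [(hAu.piCoordSection i).volume_eq_two_pow_mul_volume_inter_Ici, Fintype.card_fin,
      hAu.piCoordSection_inter_Ici]
  calc ∑ i, ENNReal.ofReal (2 * z i / (n + 1)) * volume (_root_.piCoordSection i A)
      = 2 ^ (n + 1) * ∑ i, ENNReal.ofReal (z i / (n + 1)) *
          volume (_root_.piCoordSection i (A ∩ Ici 0)) := by
        rw [Finset.mul_sum]
        refine Finset.sum_congr rfl fun i _ => ?_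
        rw [hsec, mul_div_assoc, ENNReal.ofReal_mul zero_le_two, ENNReal.ofReal_ofNat]
        ring
    _ ≤ 2 ^ (n + 1) * volume (A ∩ Ici 0) := by
        gcongr
        exact (hA.inter (convex_Ici 0)).sum_ofReal_mul_volume_piCoordSection_le
          inter_subset_right ⟨hz, hz0⟩
    _ = volume A := by rw [hAu.volume_eq_two_pow_mul_volume_inter_Ici, Fintype.card_fin]

theorem sum_mul_toReal_div_toReal_le_one {ι : Type*} [Fintype ι] {c : ι → ℝ}
    (hc : ∀ i, 0 ≤ c i) {a : ι → ENNReal} {V : ENNReal}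
    (h : ∑ i, ENNReal.ofReal (c i) * a i ≤ V) :
    (∑ i, c i * (a i).toReal) / V.toReal ≤ 1 := by
  rcases eq_or_ne V ⊤ with rfl | hV
  · simp
  have hfin : ∀ i ∈ Finset.univ, ENNReal.ofReal (c i) * a i ≠ ⊤ := fun i hi =>
    ne_top_of_le_ne_top hV ((Finset.single_le_sum (fun _ _ => zero_le) hi).trans h)
  refine div_le_one_of_le₀ ?_ ENNReal.toReal_nonneg
  calc ∑ i, c i * (a i).toReal = (∑ i, ENNReal.ofReal (c i) * a i).toReal := by
        simp only [ENNReal.toReal_sum hfin, ENNReal.toReal_mul, ENNReal.toReal_ofReal (hc _)]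
    _ ≤ V.toReal := ENNReal.toReal_mono hV h

section EuclideanSpace

theorem volume_toLp_preimage {ι : Type*} [Fintype ι] (S : Set (EuclideanSpace ℝ ι)) :
    volume (WithLp.toLp 2 ⁻¹' S) = volume S :=
  (EuclideanSpace.volume_preserving_symm_measurableEquiv_toLp ι).symm.measure_preimage_equiv S

variable {n : ℕ} {K : Set (EuclideanSpace ℝ (Fin (n + 1)))}

theorem toLp_preimage_coordSection (i : Fin (n + 1)) :
    WithLp.toLp 2 ⁻¹' coordSection i K = piCoordSection i (WithLp.toLp 2 ⁻¹' K) := by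
  ext y
  constructor
  · rintro ⟨x, hx, hxy⟩
    exact ⟨x.ofLp, hx, congrArg WithLp.ofLp hxy⟩
  · rintro ⟨x, hx, rfl⟩
    exact ⟨WithLp.toLp 2 x, hx, rfl⟩

theorem IsUnconditionalBody.isUnconditional_toLp_preimage (hK : IsUnconditionalBody K) :
    IsUnconditional (WithLp.toLp 2 ⁻¹' K) :=
  fun _ hx => hK.2.2.2 _ hx

theorem IsUnconditionalBody.convex_toLp_preimage (hK : IsUnconditionalBody K) :
    Convex ℝ (WithLp.toLp 2 ⁻¹' K) :=
  hK.2.1.linear_preimage (WithLp.linearEquiv 2 ℝ (Fin (n + 1) → ℝ)).symm.toLinearMap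

theorem IsUnconditionalBody.sum_mul_le_one (hK : IsUnconditionalBody K)
    {z : EuclideanSpace ℝ (Fin (n + 1))} (hz : z ∈ K) (hz0 : ∀ i, 0 ≤ z i) :
    ∑ i, z i * (2 * (volume (coordSection i K)).toReal / ((n + 1) * (volume K).toReal)) ≤ 1 := by
  have h := IsUnconditional.sum_ofReal_mul_volume_piCoordSection_le
    hK.isUnconditional_toLp_preimage hK.convex_toLp_preimage (z := z.ofLp) hz hz0
  simp only [← toLp_preimage_coordSection, volume_toLp_preimage] at h
  calc _ = (∑ i, 2 * z i / (n + 1) * (volume (coordSection i K)).toReal) / (volume K).toReal := by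
        rw [Finset.sum_div]
        refine Finset.sum_congr rfl fun i _ => ?_
        rw [mul_comm ((n : ℝ) + 1), ← div_div]
        ring
    _ ≤ 1 := sum_mul_toReal_div_toReal_le_one (fun i => by have := hz0 i; positivity) h

end EuclideanSpace

theorem section_point_mem_polar_general {n : ℕ}
    (K : Set (EuclideanSpace ℝ (Fin (n + 1)))) (hK : IsUnconditionalBody K) :
    (WithLp.toLp 2 (fun i => 2 * (volume (coordSection i K)).toReal /
        ((n + 1) * (volume K).toReal)) : EuclideanSpace ℝ (Fin (n + 1))) ∈ polarBody K := by
  intro y hy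
  have habs : WithLp.toLp 2 (fun i => |y i|) ∈ K :=
    IsUnconditional.abs_mem hK.isUnconditional_toLp_preimage (x := y.ofLp) hy
  calc inner ℝ y _ = ∑ i, y i * (2 * (volume (coordSection i K)).toReal /
        ((n + 1) * (volume K).toReal)) := by
        simp [PiLp.inner_apply, mul_comm]
    _ ≤ ∑ i, |y i| * (2 * (volume (coordSection i K)).toReal /
        ((n + 1) * (volume K).toReal)) := by
        gcongr with i
        exact le_abs_self _
    _ ≤ 1 := hK.sum_mul_le_one habs fun i => abs_nonneg _

theorem section_point_mem_polar {n : ℕ} (hn : 1 ≤ n)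
    (K : Set (EuclideanSpace ℝ (Fin (n + 1)))) (hK : IsUnconditionalBody K)
    (x : EuclideanSpace ℝ (Fin (n + 1))) (hx : x ∈ K) (hx0 : ∀ i, 0 ≤ x i) :
    (WithLp.toLp 2 (fun i => 2 * (volume (coordSection i K)).toReal /
        ((n + 1) * (volume K).toReal)) : EuclideanSpace ℝ (Fin (n + 1))) ∈ polarBody K :=
  section_point_mem_polar_general K hK
end
end

section
/- Let n ≥ 2 and let K ⊂ B_∞^n be a convex body such that K ∩ e_j^⊥ = B_∞^n ∩ e_j^⊥ for all j = 1,…,n. Then the hyperplane piece {x ∈ B_∞^n : x_1+⋯+x_n = n-1} is contained in K, and consequently if p = (t,…,t) ∈ ∂K with t ≥ 0, then t ≥ (n-1)/n. -/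
/-!
The points `𝟙 - e_j` lie in the cube and in `e_j^⊥`, hence in `K`, and every point `x` of the
cube with `∑ x_i = n - 1` is their convex combination with weights `1 - x_j`. Likewise, for
`n ≥ 2` the segments `[-e_j, e_j]` lie in coordinate hyperplanes other than `e_j^⊥`, so `K`
contains their convex hull and `0` is an interior point of `K`. As `((n-1)/n) 𝟙` lies on the
slab, each `t 𝟙` with `0 ≤ t < (n-1)/n` lies on the half-open segment from the interior point
`0` to a point of `K`, hence in the interior of `K`.
-/

open MeasureTheory ENNReal

noncomputable section

/-- The unit cube `B_∞^n = [-1,1]^n`. -/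
def unitCube (n : ℕ) : Set (EuclideanSpace ℝ (Fin n)) :=
  {x | ∀ i, |x i| ≤ 1}

section TopologicalVectorSpace

variable {E : Type*} [AddCommGroup E] [Module ℝ E] [TopologicalSpace E] [IsTopologicalAddGroup E]
  [ContinuousConstSMul ℝ E] {K : Set E}

theorem Convex.smul_mem_interior_of_zero_mem_interior (hK : Convex ℝ K) (h0 : 0 ∈ interior K)
    {x : E} (hx : x ∈ K) {s : ℝ} (hs₀ : 0 ≤ s) (hs₁ : s < 1) : s • x ∈ interior K := by
  simpa using hK.combo_interior_self_mem_interior h0 hx (sub_pos.2 hs₁) hs₀ (sub_add_cancel 1 s)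

theorem Convex.le_of_smul_mem_of_smul_mem_frontier (hK : Convex ℝ K) (h0 : 0 ∈ interior K)
    {v : E} {c t : ℝ} (hc : c • v ∈ K) (ht : 0 ≤ t) (hfront : t • v ∈ frontier K) : c ≤ t := by
  by_contra! htc
  have hc₀ : 0 < c := ht.trans_lt htc
  have hscaled : (t / c) • c • v ∈ interior K :=
    hK.smul_mem_interior_of_zero_mem_interior h0 hc (div_nonneg ht hc₀.le)
      ((div_lt_one hc₀).2 htc)
  rw [smul_smul, div_mul_cancel₀ t hc₀.ne'] at hscaled
  exact hfront.2 hscaled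

end TopologicalVectorSpace

section EuclideanSpace

variable {ι : Type*} [Fintype ι] [DecidableEq ι] {K : Set (EuclideanSpace ℝ ι)}

theorem Convex.mem_of_le_one_of_sum_eq_card_sub_one (hK : Convex ℝ K)
    (hvert : ∀ j, WithLp.toLp 2 (fun _ => 1) - EuclideanSpace.single j 1 ∈ K)
    {x : EuclideanSpace ℝ ι} (hle : ∀ i, x i ≤ 1) (hsum : ∑ i, x i = Fintype.card ι - 1) :
    x ∈ K := by
  have hweights : ∑ j, (1 - x j) = 1 := by
    rw [Finset.sum_sub_distrib, hsum]; simp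
  convert hK.sum_mem (fun j _ => sub_nonneg.2 (hle j)) hweights (fun j _ => hvert j) using 1
  ext i
  simp [Finset.sum_apply, mul_sub, Finset.sum_sub_distrib, hweights, Pi.single_apply]

theorem Convex.ball_zero_subset_of_single_mem (hK : Convex ℝ K) {r : ℝ}
    (hsingle : ∀ j a, |a| ≤ r → EuclideanSpace.single j a ∈ K) :
    Metric.ball 0 (r / Fintype.card ι) ⊆ K := by
  intro z hz
  set N : ℝ := (Fintype.card ι : ℝ)
  rw [mem_ball_zero_iff] at hz
  have hN : 0 < N := by
    by_contra! h
    rw [le_antisymm h (by positivity)] at hz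
    exact (norm_nonneg z).not_gt (by simpa using hz)
  have hcoord : ∀ j, |N * z j| ≤ r := fun j => by
    rw [abs_mul, abs_of_pos hN, ← le_div_iff₀' hN]
    exact (PiLp.norm_apply_le z j).trans hz.le
  convert hK.sum_mem (t := Finset.univ) (fun j _ => (inv_pos.2 hN).le)
    (by simp [N, hN.ne']) (fun j _ => hsingle j _ (hcoord j)) using 1
  ext i
  simp [Finset.sum_apply, Pi.single_apply, hN.ne']

end EuclideanSpace

section UnitCube

variable {n : ℕ} {K : Set (EuclideanSpace ℝ (Fin n))}

theorem mem_of_mem_unitCube_of_apply_eq_zero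
    (hsect : ∀ j : Fin n, {x | x ∈ K ∧ x j = 0} = {x | x ∈ unitCube n ∧ x j = 0})
    {x : EuclideanSpace ℝ (Fin n)} (hx : x ∈ unitCube n) {j : Fin n} (hxj : x j = 0) : x ∈ K :=
  ((Set.ext_iff.1 (hsect j) x).2 ⟨hx, hxj⟩).1

theorem slab_subset_of_sections_eq (hK : Convex ℝ K)
    (hsect : ∀ j : Fin n, {x | x ∈ K ∧ x j = 0} = {x | x ∈ unitCube n ∧ x j = 0}) :
    {x | x ∈ unitCube n ∧ ∑ i, x i = (n : ℝ) - 1} ⊆ K := by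
  rintro x ⟨hcube, hsum⟩
  refine hK.mem_of_le_one_of_sum_eq_card_sub_one (fun j => ?_)
    (fun i => (le_abs_self _).trans (hcube i)) (by simpa using hsum)
  refine mem_of_mem_unitCube_of_apply_eq_zero hsect (j := j) (fun i => ?_) (by simp)
  by_cases hij : i = j <;> simp [hij]

theorem zero_mem_interior_of_sections_eq (hn : 2 ≤ n) (hK : Convex ℝ K)
    (hsect : ∀ j : Fin n, {x | x ∈ K ∧ x j = 0} = {x | x ∈ unitCube n ∧ x j = 0}) :
    0 ∈ interior K := by
  have : Nontrivial (Fin n) := Fin.nontrivial_iff_two_le.2 hn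
  have hsingle : ∀ j (a : ℝ), |a| ≤ 1 → EuclideanSpace.single j a ∈ K := by
    intro j a ha
    obtain ⟨k, hkj⟩ := exists_ne j
    refine mem_of_mem_unitCube_of_apply_eq_zero hsect (j := k) (fun i => ?_) (by simp [hkj])
    by_cases hij : i = j <;> simp [hij, ha]
  refine mem_interior.2 ⟨_, hK.ball_zero_subset_of_single_mem hsingle, Metric.isOpen_ball,
    Metric.mem_ball_self (by positivity)⟩

end UnitCube

theorem slab_subset_and_diagonal_bound_general {n : ℕ} (hn : 2 ≤ n)
    (K : Set (EuclideanSpace ℝ (Fin n)))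
    (hbody : IsCompact K ∧ Convex ℝ K ∧ (interior K).Nonempty)
    (hsect : ∀ j : Fin n, {x | x ∈ K ∧ x j = 0} = {x | x ∈ unitCube n ∧ x j = 0}) :
    {x | x ∈ unitCube n ∧ ∑ i, x i = (n : ℝ) - 1} ⊆ K ∧
      ∀ t : ℝ, 0 ≤ t →
        (WithLp.toLp 2 (fun _ => t) : EuclideanSpace ℝ (Fin n)) ∈ frontier K →
        ((n : ℝ) - 1) / n ≤ t := by
  obtain ⟨-, hK, -⟩ := hbody
  have hslab := slab_subset_of_sections_eq hK hsect
  refine ⟨hslab, fun t ht hfront => ?_⟩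
  have hn₀ : (0 : ℝ) < n := by positivity
  have hn₁ : (1 : ℝ) ≤ n := by exact_mod_cast one_le_two.trans hn
  set c : ℝ := ((n : ℝ) - 1) / n
  have hdiag (s : ℝ) : WithLp.toLp 2 (fun _ => s) =
      s • (WithLp.toLp 2 (fun _ => 1) : EuclideanSpace ℝ (Fin n)) := by
    ext; simp
  have hc : c • (WithLp.toLp 2 (fun _ => 1) : EuclideanSpace ℝ (Fin n)) ∈ K := by
    rw [← hdiag]
    refine hslab ⟨fun i => ?_, ?_⟩
    · rw [abs_of_nonneg (div_nonneg (by linarith) hn₀.le), div_le_one hn₀]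
      linarith
    · simp [c, field]
  rw [hdiag] at hfront
  exact hK.le_of_smul_mem_of_smul_mem_frontier (zero_mem_interior_of_sections_eq hn hK hsect)
    hc ht hfront

theorem slab_subset_and_diagonal_bound {n : ℕ} (hn : 2 ≤ n)
    (K : Set (EuclideanSpace ℝ (Fin n)))
    (hbody : IsCompact K ∧ Convex ℝ K ∧ (interior K).Nonempty)
    (hKsub : K ⊆ unitCube n)
    (hsect : ∀ j : Fin n, {x | x ∈ K ∧ x j = 0} = {x | x ∈ unitCube n ∧ x j = 0}) :
    {x | x ∈ unitCube n ∧ ∑ i, x i = (n : ℝ) - 1} ⊆ K ∧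
      ∀ t : ℝ, 0 ≤ t →
        (WithLp.toLp 2 (fun _ => t) : EuclideanSpace ℝ (Fin n)) ∈ frontier K →
        ((n : ℝ) - 1) / n ≤ t :=
  slab_subset_and_diagonal_bound_general hn K hbody hsect
end
end
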